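/- arXiv:0806.2820 — 6 statements merged into one kernel-verified Lean document; each statement's English description precedes it below -/
import Mathlib

section
/- Every contraction on a finite-dimensional complex Hilbert space (an operator with operator norm at most 1) can be written as a convex combination of unitary operators. -/
/-!
Polar decomposition: since `‖|A| x‖ = ‖A x‖`, the map `|A| x ↦ A x` is a well-defined linear
isometry on the range of `|A| = √(A⋆A)`, and in finite dimension it extends to a unitary `W`
with `A = W |A|`. The positive contraction `|A|` is the real part of the unitary
`u = |A| + i √(1 - |A|²)`, so `A = (W u + W u⋆) / 2`.
-/

open ContinuousLinearMap

theorem LinearMap.exists_linearIsometry_comp_rangeRestrict {R E F G : Type*} [Ring R]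
    [AddCommGroup E] [Module R E] [NormedAddCommGroup F] [Module R F]
    [NormedAddCommGroup G] [Module R G] (f : E →ₗ[R] F) (g : E →ₗ[R] G)
    (h : ∀ x, ‖g x‖ = ‖f x‖) :
    ∃ L : LinearMap.range f →ₗᵢ[R] G, ∀ x, L (f.rangeRestrict x) = g x := by
  have hker : LinearMap.ker f ≤ LinearMap.ker g := fun x hx => by
    rw [LinearMap.mem_ker] at hx ⊢
    rw [← norm_eq_zero, h x, hx, norm_zero]
  let L := (LinearMap.ker f).liftQ g hker ∘ₗ f.quotKerEquivRange.symm.toLinearMap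
  have hL : ∀ x, L (f.rangeRestrict x) = g x := fun x => by
    have hmk : f.quotKerEquivRange.symm (f.rangeRestrict x) = Submodule.Quotient.mk x :=
      (LinearEquiv.symm_apply_eq _).2 (Subtype.ext (LinearMap.quotKerEquivRange_apply_mk f x).symm)
    simp only [L, LinearMap.coe_comp, LinearEquiv.coe_coe, Function.comp_apply, hmk,
      Submodule.liftQ_apply]
  refine ⟨⟨L, ?_⟩, hL⟩
  rintro ⟨_, x, rfl⟩
  exact (congrArg norm (hL x)).trans (h x)

section

variable {E : Type*} [NormedAddCommGroup E] [InnerProductSpace ℂ E]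

theorem LinearIsometry.toContinuousLinearMap_mem_unitary [FiniteDimensional ℂ E]
    (L : E →ₗᵢ[ℂ] E) : L.toContinuousLinearMap ∈ unitary (E →L[ℂ] E) :=
  (Unitary.linearIsometryEquiv.symm (L.toLinearIsometryEquiv rfl)).2

theorem ContinuousLinearMap.norm_cfcAbs_apply [CompleteSpace E] (A : E →L[ℂ] E) (x : E) :
    ‖CFC.abs A x‖ = ‖A x‖ := by
  rw [← sq_eq_sq₀ (norm_nonneg _) (norm_nonneg _), apply_norm_sq_eq_inner_adjoint_left,
    apply_norm_sq_eq_inner_adjoint_left, ← star_eq_adjoint,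
    (CFC.abs_nonneg A).isSelfAdjoint.star_eq, ← mul_def, CFC.abs_mul_abs, star_eq_adjoint,
    mul_def]

theorem ContinuousLinearMap.exists_mem_unitary_eq_mul_cfcAbs [FiniteDimensional ℂ E]
    (A : E →L[ℂ] E) : ∃ W ∈ unitary (E →L[ℂ] E), A = W * CFC.abs A := by
  obtain ⟨L, hL⟩ := LinearMap.exists_linearIsometry_comp_rangeRestrict
    ((CFC.abs A : E →L[ℂ] E) : E →ₗ[ℂ] E) (A : E →ₗ[ℂ] E)
    fun x => (A.norm_cfcAbs_apply x).symm
  refine ⟨L.extend.toContinuousLinearMap, L.extend.toContinuousLinearMap_mem_unitary, ?_⟩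
  ext x
  exact (hL x).symm.trans (L.extend_apply _).symm

theorem ContinuousLinearMap.exists_mem_unitary_eq_two_inv_smul_add [FiniteDimensional ℂ E]
    (A : E →L[ℂ] E) (hA : ‖A‖ ≤ 1) :
    ∃ U ∈ unitary (E →L[ℂ] E), ∃ V ∈ unitary (E →L[ℂ] E), A = (2⁻¹ : ℂ) • (U + V) := by
  obtain ⟨W, hW, hWA⟩ := A.exists_mem_unitary_eq_mul_cfcAbs
  let absA : selfAdjoint (E →L[ℂ] E) := ⟨CFC.abs A, (CFC.abs_nonneg A).isSelfAdjoint⟩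
  have habsA : ‖absA‖ ≤ 1 := CFC.norm_abs.trans_le hA
  let u := selfAdjoint.unitarySelfAddISMul absA habsA
  have hre : (2⁻¹ : ℝ) • ((u : E →L[ℂ] E) + star (u : E →L[ℂ] E)) = CFC.abs A := by
    rw [← realPart_apply_coe, selfAdjoint.realPart_unitarySelfAddISMul]
  refine ⟨W * u, mul_mem hW u.2, W * star (u : E →L[ℂ] E),
    mul_mem hW (Unitary.star_mem u.2), ?_⟩
  rw [hWA, ← hre, ← mul_add, mul_smul_comm, ← Complex.coe_smul]
  norm_num

end

/-- Every contraction on a finite-dimensional complex Hilbert space is a convex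
combination of unitary operators. -/
theorem stmt_1 (E : Type*) [NormedAddCommGroup E] [InnerProductSpace ℂ E]
    [FiniteDimensional ℂ E] (A : E →L[ℂ] E) (hA : ‖A‖ ≤ 1) :
    ∃ (n : ℕ) (p : Fin n → ℝ) (U : Fin n → E →L[ℂ] E),
      (∀ i, 0 ≤ p i) ∧ ∑ i, p i = 1 ∧ (∀ i, U i ∈ unitary (E →L[ℂ] E)) ∧
      A = ∑ i, (p i : ℂ) • U i := by
  obtain ⟨U, hU, V, hV, rfl⟩ := A.exists_mem_unitary_eq_two_inv_smul_add hA
  refine ⟨2, fun _ => 2⁻¹, ![U, V], fun _ => by norm_num, by norm_num, ?_, ?_⟩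
  · intro i
    fin_cases i
    exacts [hU, hV]
  · simp [Fin.sum_univ_two, smul_add]
end

section
/- The real span with coefficients summing to zero of the set of unitary conjugation maps (restricted to traceless Hermitian d×d matrices) equals the space of all real-linear maps on the space of traceless Hermitian d×d matrices. That is, every real-linear map L on {A ∈ M_d(ℂ) : A=A†, tr A=0} can be written L = Σ_i λ_i Ad_{U_i} with λ_i ∈ ℝ, Σ λ_i = 0, and U_i unitary. -/
/-!
Let `W` be the real span of the maps `Ad_U - 1`; a combination `∑ λᵢ Ad_{Uᵢ}` with `∑ λᵢ = 0` is
`∑ λᵢ (Ad_{Uᵢ} - 1)`, so `W` is the zerospan of the conjugations. Since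
`Ad_U (Ad_V - 1) = (Ad_{UV} - 1) - (Ad_U - 1)`, and symmetrically on the right, `W` is closed under
composition with anything in the real span of the conjugations, e.g. with the dephasing map
`A ↦ diag A`, the average of the conjugations by diagonal sign matrices.

For a transposition `(i p)` with permutation matrix `P`, `(Ad_P - 1) ∘ diag` is minus the rank-one
map `A ↦ tr(Xᵢ A) Xᵢ`, where `Xᵢ = Eᵢᵢ - Eₚₚ`. The product of two of these is
`tr(Xᵢ Xⱼ) (A ↦ tr(Xⱼ A) Xᵢ)` and `tr(Xᵢ Xⱼ) = 1` for distinct `i, j ≠ p`, so `W` contains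
`A ↦ tr(D A) D'` for all real traceless diagonal `D, D'`. Diagonalising by unitaries gives
`A ↦ tr(E A) F` for all traceless Hermitian `E, F`. Finally, the real and imaginary parts of the
matrix units form a tight frame, so every real-linear `L` on traceless Hermitian matrices is a sum
of such rank-one maps.
-/

open Matrix

noncomputable section

namespace Matrix

section

variable {n : Type*} [Fintype n]

def conjEnd (U : Matrix n n ℂ) : Module.End ℂ (Matrix n n ℂ) :=
  LinearMap.mulLeft ℂ U ∘ₗ LinearMap.mulRight ℂ Uᴴ

@[simp]
theorem conjEnd_apply (U A : Matrix n n ℂ) : conjEnd U A = U * A * Uᴴ := by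
  simp [conjEnd, Matrix.mul_assoc]

theorem conjEnd_mul (U V : Matrix n n ℂ) : conjEnd (U * V) = conjEnd U * conjEnd V := by
  ext1 A
  simp [conjTranspose_mul, Matrix.mul_assoc]

def traceRankOne : Matrix n n ℂ →ₗ[ℂ] Matrix n n ℂ →ₗ[ℂ] Module.End ℂ (Matrix n n ℂ) :=
  LinearMap.mk₂ ℂ (fun E F => (traceLinearMap n ℂ ℂ ∘ₗ LinearMap.mulLeft ℂ E).smulRight F)
    (fun _ _ _ => by ext1; simp [Matrix.add_mul, add_smul])
    (fun _ _ _ => by ext1; simp [smul_smul])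
    (fun _ _ _ => by ext1; simp)
    (fun _ _ _ => by ext1; exact smul_comm _ _ _)

@[simp]
theorem traceRankOne_apply (E F A : Matrix n n ℂ) : traceRankOne E F A = (E * A).trace • F := by
  simp [traceRankOne]

theorem traceRankOne_mul_traceRankOne (E F E' F' : Matrix n n ℂ) :
    traceRankOne E F * traceRankOne E' F' = (E * F').trace • traceRankOne E' F := by
  ext1 A
  simp only [Module.End.mul_apply, traceRankOne_apply, LinearMap.smul_apply, Matrix.mul_smul,
    trace_smul, smul_eq_mul, smul_smul, mul_comm]

theorem conjEnd_mul_traceRankOne (U E F : Matrix n n ℂ) :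
    conjEnd U * traceRankOne E F = traceRankOne E (U * F * Uᴴ) := by
  ext1 A
  simp

theorem traceRankOne_mul_conjEnd (U E F : Matrix n n ℂ) :
    traceRankOne E F * conjEnd U = traceRankOne (Uᴴ * E * U) F := by
  ext1 A
  simp only [Module.End.mul_apply, conjEnd_apply, traceRankOne_apply]
  rw [← Matrix.mul_assoc, ← Matrix.mul_assoc, trace_mul_comm, ← Matrix.mul_assoc,
    ← Matrix.mul_assoc]

theorem IsHermitian.ofReal_re_trace_mul {A B : Matrix n n ℂ} (hA : A.IsHermitian)
    (hB : B.IsHermitian) : (((A * B).trace.re : ℝ) : ℂ) = (A * B).trace := by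
  rw [← Complex.conj_eq_iff_re, starRingEnd_apply, ← trace_conjTranspose, conjTranspose_mul,
    hA.eq, hB.eq, trace_mul_comm]

open ComplexStarModule in
theorem trace_mul_smul_realPart_add_imaginaryPart (X A : Matrix n n ℂ) :
    ((ℜ X : Matrix n n ℂ) * A).trace • (ℜ X : Matrix n n ℂ) +
      ((ℑ X : Matrix n n ℂ) * A).trace • (ℑ X : Matrix n n ℂ) =
      (2 : ℂ)⁻¹ • ((X * A).trace • Xᴴ + (Xᴴ * A).trace • X) := by
  simp only [realPart_apply_coe, imaginaryPart_apply_coe, ← Complex.coe_smul,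
    star_eq_conjTranspose, smul_mul, Matrix.add_mul, Matrix.sub_mul, trace_add, trace_sub,
    trace_smul, smul_eq_mul]
  linear_combination (norm := module)
    Complex.I_mul_I • ((((X * A).trace - (Xᴴ * A).trace) * (4 : ℂ)⁻¹) • (X - Xᴴ))

variable [DecidableEq n]

theorem trace_diagonal_mul {R : Type*} [NonUnitalNonAssocSemiring R]
    (a : n → R) (A : Matrix n n R) : (diagonal a * A).trace = ∑ i, a i * A i i := by
  simp [trace, diagonal_mul]

theorem sum_units_int_mul (m k : n) :
    ∑ s : n → ℤˣ, ((s m * s k : ℤˣ) : ℤ) = if m = k then (Fintype.card (n → ℤˣ) : ℤ) else 0 := by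
  split_ifs with hmk
  · simp [hmk]
  -- Flipping the sign of the `m`-th coordinate negates every term.
  have hflip := Equiv.sum_comp (Equiv.mulLeft (Pi.mulSingle m (-1) : n → ℤˣ))
    fun s => ((s m * s k : ℤˣ) : ℤ)
  simp only [Equiv.coe_mulLeft, Pi.mul_apply, Pi.mulSingle_eq_same,
    Pi.mulSingle_eq_of_ne (Ne.symm hmk), one_mul, neg_mul, Units.val_neg, Finset.sum_neg_distrib]
    at hflip
  omega

theorem diagonal_units_mem_unitaryGroup {α : Type*} [CommRing α] [StarRing α] (s : n → ℤˣ) :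
    diagonal (fun i => ((s i : ℤ) : α)) ∈ unitaryGroup n α := by
  rw [mem_unitaryGroup_iff, star_eq_conjTranspose, diagonal_conjTranspose, diagonal_mul_diagonal,
    ← diagonal_one]
  congr 1
  ext i
  simp [← Int.cast_mul, ← Units.val_mul]

theorem permMatrix_mem_unitaryGroup {α : Type*} [CommRing α] [StarRing α] (σ : Equiv.Perm n) :
    σ.permMatrix α ∈ unitaryGroup n α := by
  rw [mem_unitaryGroup_iff, star_eq_conjTranspose, conjTranspose_permMatrix, ← permMatrix_mul,
    inv_mul_cancel, permMatrix_one]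

@[simp]
theorem conjEnd_one : conjEnd (1 : Matrix n n ℂ) = 1 := by
  ext1 A
  simp

theorem conjEnd_permMatrix_diagonal (σ : Equiv.Perm n) (a : n → ℂ) :
    conjEnd (σ.permMatrix ℂ) (diagonal a) = diagonal (a ∘ σ) := by
  rw [conjEnd_apply, conjTranspose_permMatrix, Equiv.Perm.permMatrix, Equiv.Perm.permMatrix,
    PEquiv.toMatrix_toPEquiv_mul, PEquiv.mul_toMatrix_toPEquiv, submatrix_submatrix,
    Equiv.Perm.inv_def, Equiv.symm_symm, Function.comp_id, Function.id_comp,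
    submatrix_diagonal_equiv]

variable (n) in
def conjSpan : Submodule ℝ (Module.End ℂ (Matrix n n ℂ)) :=
  Submodule.span ℝ (conjEnd '' unitaryGroup n ℂ)

variable (n) in
def conjZeroSpan : Submodule ℝ (Module.End ℂ (Matrix n n ℂ)) :=
  Submodule.span ℝ ((fun U => conjEnd U - 1) '' unitaryGroup n ℂ)

theorem conjEnd_mem_conjSpan {U : Matrix n n ℂ} (hU : U ∈ unitaryGroup n ℂ) :
    conjEnd U ∈ conjSpan n :=
  Submodule.subset_span ⟨U, hU, rfl⟩

theorem conjEnd_sub_one_mem_conjZeroSpan {U : Matrix n n ℂ} (hU : U ∈ unitaryGroup n ℂ) :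
    conjEnd U - 1 ∈ conjZeroSpan n :=
  Submodule.subset_span ⟨U, hU, rfl⟩

theorem conjZeroSpan_le_conjSpan : conjZeroSpan n ≤ conjSpan n := by
  refine Submodule.span_le.mpr ?_
  rintro _ ⟨U, hU, rfl⟩
  rw [← conjEnd_one]
  exact sub_mem (conjEnd_mem_conjSpan hU) (conjEnd_mem_conjSpan (one_mem _))

theorem conjEnd_mul_mem_conjZeroSpan {U : Matrix n n ℂ} (hU : U ∈ unitaryGroup n ℂ)
    {f : Module.End ℂ (Matrix n n ℂ)} (hf : f ∈ conjZeroSpan n) :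
    conjEnd U * f ∈ conjZeroSpan n := by
  induction hf using Submodule.span_induction with
  | mem g hg =>
    obtain ⟨V, hV, rfl⟩ := hg
    have hUV : conjEnd U * (conjEnd V - 1) = (conjEnd (U * V) - 1) - (conjEnd U - 1) := by
      rw [conjEnd_mul, mul_sub, mul_one]; abel
    rw [hUV]
    exact sub_mem (conjEnd_sub_one_mem_conjZeroSpan (mul_mem hU hV))
      (conjEnd_sub_one_mem_conjZeroSpan hU)
  | zero => simp
  | add f g _ _ hf hg => rw [mul_add]; exact add_mem hf hg
  | smul r f _ hf => rw [mul_smul_comm]; exact Submodule.smul_mem _ r hf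

theorem mul_conjEnd_mem_conjZeroSpan {U : Matrix n n ℂ} (hU : U ∈ unitaryGroup n ℂ)
    {f : Module.End ℂ (Matrix n n ℂ)} (hf : f ∈ conjZeroSpan n) :
    f * conjEnd U ∈ conjZeroSpan n := by
  induction hf using Submodule.span_induction with
  | mem g hg =>
    obtain ⟨V, hV, rfl⟩ := hg
    have hVU : (conjEnd V - 1) * conjEnd U = (conjEnd (V * U) - 1) - (conjEnd U - 1) := by
      rw [conjEnd_mul, sub_mul, one_mul]; abel
    rw [hVU]
    exact sub_mem (conjEnd_sub_one_mem_conjZeroSpan (mul_mem hV hU))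
      (conjEnd_sub_one_mem_conjZeroSpan hU)
  | zero => simp
  | add f g _ _ hf hg => rw [add_mul]; exact add_mem hf hg
  | smul r f _ hf => rw [smul_mul_assoc]; exact Submodule.smul_mem _ r hf

theorem mul_mem_conjZeroSpan {f g : Module.End ℂ (Matrix n n ℂ)} (hf : f ∈ conjZeroSpan n)
    (hg : g ∈ conjSpan n) : f * g ∈ conjZeroSpan n := by
  induction hg using Submodule.span_induction with
  | mem g hg =>
    obtain ⟨U, hU, rfl⟩ := hg
    exact mul_conjEnd_mem_conjZeroSpan hU hf
  | zero => simp
  | add g h _ _ hg hh => rw [mul_add]; exact add_mem hg hh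
  | smul r g _ hg => rw [mul_smul_comm]; exact Submodule.smul_mem _ r hg

theorem exists_mem_conjSpan_apply_eq_diagonal_diag :
    ∃ Δ ∈ conjSpan n, ∀ A : Matrix n n ℂ, Δ A = diagonal A.diag := by
  set N := Fintype.card (n → ℤˣ)
  have hN : (N : ℂ) ≠ 0 := Nat.cast_ne_zero.mpr Fintype.card_ne_zero
  refine ⟨∑ s : n → ℤˣ, (N : ℝ)⁻¹ • conjEnd (diagonal fun i => ((s i : ℤ) : ℂ)),
    Submodule.sum_mem _ fun s _ =>
      Submodule.smul_mem _ _ (conjEnd_mem_conjSpan (diagonal_units_mem_unitaryGroup s)),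
    fun A => ?_⟩
  ext m k
  have hterm : ∀ s : n → ℤˣ, (conjEnd (diagonal fun i => ((s i : ℤ) : ℂ)) A) m k =
      (((s m * s k : ℤˣ) : ℤ) : ℂ) * A m k := by
    intro s
    simp only [conjEnd_apply, diagonal_conjTranspose, diagonal_mul, mul_diagonal, Pi.star_apply,
      star_intCast, Units.val_mul, Int.cast_mul]
    ring
  have hsum : ∑ s : n → ℤˣ, (((s m * s k : ℤˣ) : ℤ) : ℂ) = if m = k then (N : ℂ) else 0 := by
    exact_mod_cast sum_units_int_mul m k
  simp only [LinearMap.coe_sum, Finset.sum_apply, LinearMap.smul_apply, sum_apply, smul_apply,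
    hterm, ← Finset.smul_sum, ← Finset.sum_mul, hsum]
  split_ifs with hmk
  · subst hmk
    rw [diagonal_apply_eq, diag_apply, Complex.real_smul]
    push_cast
    field_simp
  · simp [diagonal_apply_ne _ hmk]

theorem traceRankOne_diagonal_single_sub_single_mem_conjZeroSpan (i p : n) :
    traceRankOne (diagonal (Pi.single i 1 - Pi.single p 1))
      (diagonal (Pi.single i 1 - Pi.single p 1)) ∈ conjZeroSpan n := by
  obtain ⟨Δ, hΔ, hΔA⟩ := exists_mem_conjSpan_apply_eq_diagonal_diag (n := n)
  have hswap : (conjEnd ((Equiv.swap i p).permMatrix ℂ) - 1) * Δ =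
      -traceRankOne (diagonal (Pi.single i 1 - Pi.single p 1))
        (diagonal (Pi.single i 1 - Pi.single p 1)) := by
    ext1 A
    simp only [Module.End.mul_apply, LinearMap.sub_apply, hΔA, Module.End.one_apply,
      LinearMap.neg_apply, traceRankOne_apply, trace_diagonal_mul, conjEnd_permMatrix_diagonal,
      diagonal_sub, ← diagonal_smul, diagonal_neg]
    congr 1
    ext m
    simp only [Pi.sub_apply, Pi.single_apply, Function.comp_apply, Equiv.swap_apply_def,
      Pi.smul_apply, diag_apply, sub_mul, ite_mul, one_mul, zero_mul, Finset.sum_sub_distrib,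
      Finset.sum_ite_eq', Finset.mem_univ, if_true, smul_eq_mul]
    split_ifs <;> subst_vars <;> ring
  rw [← neg_mem_iff, ← hswap]
  exact mul_mem_conjZeroSpan
    (conjEnd_sub_one_mem_conjZeroSpan (permMatrix_mem_unitaryGroup _)) hΔ

theorem diagonal_ofReal_eq_sum_smul (p : n) {w : n → ℝ} (hw : ∑ i, w i = 0) :
    (diagonal fun i => (w i : ℂ)) = ∑ i, w i • diagonal (Pi.single i 1 - Pi.single p 1) := by
  ext m k
  rcases eq_or_ne m k with rfl | hmk
  · simp [sum_apply, Pi.single_apply, mul_sub, Finset.sum_sub_distrib, ← Complex.ofReal_sum, hw]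
  · simp [sum_apply, hmk]

theorem traceRankOne_diagonal_mem_conjZeroSpan {u v : n → ℝ} (hu : ∑ i, u i = 0)
    (hv : ∑ i, v i = 0) :
    traceRankOne (diagonal fun i => (v i : ℂ)) (diagonal fun i => (u i : ℂ)) ∈ conjZeroSpan n := by
  rcases isEmpty_or_nonempty n with _ | ⟨⟨p⟩⟩
  · rw [Subsingleton.elim (traceRankOne _ _) 0]
    exact zero_mem _
  set X : n → Matrix n n ℂ := fun i => diagonal (Pi.single i 1 - Pi.single p 1) with hX
  have hsq : ∀ i, traceRankOne (X i) (X i) ∈ conjZeroSpan n :=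
    fun i => traceRankOne_diagonal_single_sub_single_mem_conjZeroSpan i p
  have hX_p : X p = 0 := by simp [hX]
  have hpair : ∀ i j, traceRankOne (X j) (X i) ∈ conjZeroSpan n := by
    intro i j
    by_cases hij : i = j
    · subst hij; exact hsq i
    by_cases hi : i = p
    · simp [hi, hX_p]
    by_cases hj : j = p
    · simp [hj, hX_p]
    have htr : (X i * X j).trace = 1 := by
      rw [hX, diagonal_mul_diagonal, trace_diagonal]
      change (Pi.single i 1 - Pi.single p 1) ⬝ᵥ (Pi.single j 1 - Pi.single p 1) = 1
      simp [dotProduct_sub, hij, hj, Ne.symm hi]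
    have hprod := mul_mem_conjZeroSpan (hsq i) (conjZeroSpan_le_conjSpan (hsq j))
    rwa [traceRankOne_mul_traceRankOne, htr, one_smul] at hprod
  rw [diagonal_ofReal_eq_sum_smul p hu, diagonal_ofReal_eq_sum_smul p hv]
  simp only [map_sum, LinearMap.map_smul_of_tower, LinearMap.coe_sum, Finset.sum_apply,
    LinearMap.smul_apply]
  exact Submodule.sum_mem _ fun i _ => Submodule.smul_mem _ _ <|
    Submodule.sum_mem _ fun j _ => Submodule.smul_mem _ _ (hpair i j)

theorem IsHermitian.exists_eq_conj_diagonal_of_trace_eq_zero {E : Matrix n n ℂ}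
    (hE : E.IsHermitian) (hEt : E.trace = 0) : ∃ V ∈ unitaryGroup n ℂ, ∃ e : n → ℝ,
      ∑ i, e i = 0 ∧ E = V * diagonal (fun i => (e i : ℂ)) * Vᴴ := by
  refine ⟨hE.eigenvectorUnitary, hE.eigenvectorUnitary.2, hE.eigenvalues, ?_, ?_⟩
  · have h := hE.trace_eq_sum_eigenvalues
    rw [hEt, ← RCLike.ofReal_sum, eq_comm, RCLike.ofReal_eq_zero] at h
    exact h
  · conv_lhs => rw [hE.spectral_theorem]
    rfl

theorem traceRankOne_mem_conjZeroSpan {E F : Matrix n n ℂ} (hE : E.IsHermitian)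
    (hEt : E.trace = 0) (hF : F.IsHermitian) (hFt : F.trace = 0) :
    traceRankOne E F ∈ conjZeroSpan n := by
  obtain ⟨V, hV, e, he, rfl⟩ := hE.exists_eq_conj_diagonal_of_trace_eq_zero hEt
  obtain ⟨W, hW, f, hf, rfl⟩ := hF.exists_eq_conj_diagonal_of_trace_eq_zero hFt
  have hconj : traceRankOne (V * diagonal (fun i => (e i : ℂ)) * Vᴴ)
      (W * diagonal (fun i => (f i : ℂ)) * Wᴴ) =
      conjEnd W * traceRankOne (diagonal fun i => (e i : ℂ)) (diagonal fun i => (f i : ℂ)) *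
        conjEnd Vᴴ := by
    rw [conjEnd_mul_traceRankOne, traceRankOne_mul_conjEnd, conjTranspose_conjTranspose]
  rw [hconj]
  exact mul_mem_conjZeroSpan
    (conjEnd_mul_mem_conjZeroSpan hW (traceRankOne_diagonal_mem_conjZeroSpan hf he))
    (conjEnd_mem_conjSpan (Unitary.star_mem hV))

theorem exists_sum_eq_zero_of_mem_conjZeroSpan {f : Module.End ℂ (Matrix n n ℂ)}
    (hf : f ∈ conjZeroSpan n) :
    ∃ (k : ℕ) (lam : Fin k → ℝ) (U : Fin k → Matrix n n ℂ),
      ∑ i, lam i = 0 ∧ (∀ i, U i ∈ unitaryGroup n ℂ) ∧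
      ∀ A, f A = ∑ i, lam i • (U i * A * (U i)ᴴ) := by
  obtain ⟨k, c, g, rfl⟩ := Submodule.mem_span_set'.mp hf
  choose U hU hgU using fun i => (g i).2
  refine ⟨k + 1, Fin.cons (-∑ i, c i) c, Fin.cons 1 U, by simp [Fin.sum_univ_succ],
    Fin.cases (one_mem _) hU, fun A => ?_⟩
  simp only [← hgU, LinearMap.coe_sum, LinearMap.coe_smul, Finset.sum_apply, Pi.smul_apply,
    LinearMap.sub_apply, conjEnd_apply, Module.End.one_apply, smul_sub, Finset.sum_sub_distrib,
    Fin.sum_univ_succ, Fin.cons_zero, Fin.cons_succ, one_mul, conjTranspose_one, mul_one,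
    neg_smul, Finset.sum_smul]
  abel

variable (n) in
def tracelessPart : Module.End ℂ (Matrix n n ℂ) :=
  1 - (Fintype.card n : ℂ)⁻¹ • traceRankOne 1 1

theorem tracelessPart_apply (A : Matrix n n ℂ) :
    tracelessPart n A = A - ((Fintype.card n : ℂ)⁻¹ * A.trace) • 1 := by
  simp [tracelessPart, smul_smul]

theorem trace_tracelessPart (A : Matrix n n ℂ) : (tracelessPart n A).trace = 0 := by
  rcases isEmpty_or_nonempty n with _ | _
  · simp [trace]
  · rw [tracelessPart_apply, trace_sub, trace_smul, trace_one, smul_eq_mul]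
    field_simp
    ring

theorem tracelessPart_of_trace_eq_zero {A : Matrix n n ℂ} (hA : A.trace = 0) :
    tracelessPart n A = A := by
  simp [tracelessPart_apply, hA]

theorem isHermitian_tracelessPart {A : Matrix n n ℂ} (hA : A.IsHermitian) :
    (tracelessPart n A).IsHermitian := by
  have hc : star ((Fintype.card n : ℂ)⁻¹ * A.trace) = (Fintype.card n : ℂ)⁻¹ * A.trace := by
    rw [star_mul', ← trace_conjTranspose, hA.eq]
    simp
  rw [tracelessPart_apply]
  exact hA.sub (by rw [IsHermitian, conjTranspose_smul, conjTranspose_one, hc])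

theorem trace_tracelessPart_mul {A : Matrix n n ℂ} (hA : A.trace = 0) (B : Matrix n n ℂ) :
    (tracelessPart n B * A).trace = (B * A).trace := by
  simp [tracelessPart_apply, Matrix.sub_mul, hA]

theorem exists_mem_conjZeroSpan_eqOn_of_frame {ι : Type*} [Fintype ι] (B : ι → Matrix n n ℂ)
    (hB : ∀ q, (B q).IsHermitian) (hBA : ∀ A, ∑ q, (B q * A).trace • B q = A)
    (L : Matrix n n ℂ →ₗ[ℝ] Matrix n n ℂ)
    (hL : ∀ A : Matrix n n ℂ, Aᴴ = A → A.trace = 0 → (L A)ᴴ = L A ∧ (L A).trace = 0) :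
    ∃ f ∈ conjZeroSpan n, ∀ A : Matrix n n ℂ, Aᴴ = A → A.trace = 0 → L A = f A := by
  set P := tracelessPart n
  have hPB : ∀ q, (P (B q)).IsHermitian ∧ (P (B q)).trace = 0 :=
    fun q => ⟨isHermitian_tracelessPart (hB q), trace_tracelessPart _⟩
  refine ⟨∑ q, traceRankOne (P (B q)) (L (P (B q))), Submodule.sum_mem _ fun q _ =>
    traceRankOne_mem_conjZeroSpan (hPB q).1 (hPB q).2 (hL _ (hPB q).1 (hPB q).2).1
      (hL _ (hPB q).1 (hPB q).2).2, ?_⟩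
  intro A hA htA
  -- The coefficients `tr (B q * A)` are real, which lets the real-linear `L` through the sum.
  have hA' : ∑ q, (B q * A).trace.re • P (B q) = A := by
    conv_rhs => rw [← tracelessPart_of_trace_eq_zero htA, ← hBA A, map_sum]
    refine Finset.sum_congr rfl fun q _ => ?_
    rw [map_smul, ← Complex.coe_smul, (hB q).ofReal_re_trace_mul hA]
  calc L A = ∑ q, (B q * A).trace.re • L (P (B q)) := by
        conv_lhs => rw [← hA']
        simp only [map_sum, map_smul]
    _ = (∑ q, traceRankOne (P (B q)) (L (P (B q)))) A := by
      rw [LinearMap.sum_apply]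
      refine Finset.sum_congr rfl fun q _ => ?_
      rw [traceRankOne_apply, trace_tracelessPart_mul htA, ← (hB q).ofReal_re_trace_mul hA,
        Complex.coe_smul, Complex.ofReal_re]

end

section

variable {n : Type*} [DecidableEq n]

open ComplexStarModule in
def hermitianFrame : (n × n) ⊕ (n × n) → Matrix n n ℂ :=
  Sum.elim (fun q => ℜ (single q.1 q.2 (1 : ℂ))) (fun q => ℑ (single q.1 q.2 (1 : ℂ)))

theorem isHermitian_hermitianFrame (q : (n × n) ⊕ (n × n)) : (hermitianFrame q).IsHermitian := by
  rcases q with q | q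
  · exact (realPart _).2
  · exact (imaginaryPart _).2

variable [Fintype n]

theorem sum_trace_mul_smul_hermitianFrame (A : Matrix n n ℂ) :
    ∑ q, (hermitianFrame q * A).trace • hermitianFrame q = A := by
  have hsum : ∑ q : n × n, A q.1 q.2 • single q.1 q.2 (1 : ℂ) = A := by
    simp only [smul_single, smul_eq_mul, mul_one, Fintype.sum_prod_type]
    exact (matrix_eq_sum_single A).symm
  have hsum' : ∑ q : n × n, A q.2 q.1 • single q.2 q.1 (1 : ℂ) = A :=
    (Equiv.sum_comp (Equiv.prodComm n n) _).trans hsum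
  simp only [hermitianFrame, Fintype.sum_sum_type, Sum.elim_inl, Sum.elim_inr,
    ← Finset.sum_add_distrib, trace_mul_smul_realPart_add_imaginaryPart, ← Finset.smul_sum]
  simp only [conjTranspose_single, star_one, trace_single_mul, one_smul, Finset.sum_add_distrib,
    hsum, hsum']
  module

end

end Matrix

end

/-- Every real-linear map on the real vector space of traceless Hermitian `d × d`
matrices is a real linear combination, with coefficients summing to zero, of unitary
conjugations `A ↦ U A U†`. (The map `L` is given as a real-linear map on all matrices which
preserves the subspace of traceless Hermitian matrices.) -/
theorem stmt_3 (d : ℕ)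
    (L : Matrix (Fin d) (Fin d) ℂ →ₗ[ℝ] Matrix (Fin d) (Fin d) ℂ)
    (hL : ∀ A : Matrix (Fin d) (Fin d) ℂ, Aᴴ = A → A.trace = 0 →
      (L A)ᴴ = L A ∧ (L A).trace = 0) :
    ∃ (n : ℕ) (lam : Fin n → ℝ) (U : Fin n → Matrix (Fin d) (Fin d) ℂ),
      ∑ i, lam i = 0 ∧ (∀ i, U i ∈ Matrix.unitaryGroup (Fin d) ℂ) ∧
      ∀ A : Matrix (Fin d) (Fin d) ℂ, Aᴴ = A → A.trace = 0 →
        L A = ∑ i, lam i • (U i * A * (U i)ᴴ) := by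
  obtain ⟨f, hf, hLf⟩ := exists_mem_conjZeroSpan_eqOn_of_frame hermitianFrame
    isHermitian_hermitianFrame sum_trace_mul_smul_hermitianFrame L hL
  obtain ⟨k, lam, U, hlam, hU, hfU⟩ := exists_sum_eq_zero_of_mem_conjZeroSpan hf
  exact ⟨k, lam, U, hlam, hU, fun A hA htA => (hLf A hA htA).trans (hfU A)⟩
end

section
/- For a unitary 2×2 matrix U ∈ SU(2) and U_s = (U+U^T)/2, the trace norm (sum of the two singular values) of U_s satisfies ‖U_s‖₁ = √(tr[UŪ]+2). -/
open Matrix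
open scoped ComplexOrder

/-- The singular values of a square complex matrix (in some order). -/
noncomputable def singVals {d : ℕ} (A : Matrix (Fin d) (Fin d) ℂ) : Fin d → ℝ :=
  fun i =>
    Real.sqrt ((Matrix.posSemidef_conjTranspose_mul_self A).isHermitian.eigenvalues i)

lemma eig_scalar {r : ℝ} {M : Matrix (Fin 2) (Fin 2) ℂ} (hM : M = (r:ℂ) • 1)
    (hH : M.IsHermitian) (i : Fin 2) : hH.eigenvalues i = r := by
  have h := hH.eigenvalues_mem_spectrum_real i
  have hM' : M = algebraMap ℝ (Matrix (Fin 2) (Fin 2) ℂ) r := by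
    rw [hM, Algebra.algebraMap_eq_smul_one, ← algebraMap_smul ℂ r (1 : Matrix (Fin 2) (Fin 2) ℂ)]
    rfl
  have hs : spectrum ℝ M = {r} := by rw [hM']; exact spectrum.scalar_eq r
  rw [hs] at h
  simpa using h

/-- For `U ∈ SU(2)` and `U_s = (U + Uᵀ)/2`, the trace norm (sum of the two
singular values) of `U_s` equals `√(tr[U Ū] + 2)`. -/
theorem stmt_11 (U : Matrix (Fin 2) (Fin 2) ℂ)
    (hU : U ∈ Matrix.specialUnitaryGroup (Fin 2) ℂ) :
    ∑ i, singVals ((1 / 2 : ℂ) • (U + Uᵀ)) i =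
      Real.sqrt ((U * U.map (starRingEnd ℂ)).trace.re + 2) := by
  obtain ⟨hu, hdet⟩ := Matrix.mem_specialUnitaryGroup_iff.mp hU
  have hstar : star U = U.adjugate := by
    have h1 : U * U.adjugate = 1 := by rw [Matrix.mul_adjugate, hdet, one_smul]
    have h2 : star U * U = 1 := (Matrix.mem_unitaryGroup_iff'.mp hu)
    calc star U = star U * (U * U.adjugate) := by rw [h1, mul_one]
    _ = (star U * U) * U.adjugate := by rw [mul_assoc]
    _ = U.adjugate := by rw [h2, one_mul]
  have had := Matrix.adjugate_fin_two U
  rw [had] at hstar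
  have t11 := congr_fun (congr_fun hstar 1) 1
  have t10 := congr_fun (congr_fun hstar 1) 0
  simp [Matrix.star_apply] at t11 t10
  have h11 : U 1 1 = starRingEnd ℂ (U 0 0) := by
    simpa using congrArg (starRingEnd ℂ) t11
  have h10 : U 1 0 = - starRingEnd ℂ (U 0 1) := by
    linear_combination t10
  have hnorm : Complex.normSq (U 0 0) + Complex.normSq (U 0 1) = 1 := by
    have hd := hdet
    rw [Matrix.det_fin_two, h11, h10] at hd
    have : (Complex.normSq (U 0 0) + Complex.normSq (U 0 1) : ℂ) = 1 := by
      rw [← hd]; simp [Complex.normSq_eq_conj_mul_self]; ring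
    exact_mod_cast this
  set r : ℝ := Complex.normSq (U 0 0) + (U 0 1).im ^ 2 with hr
  have hr0 : 0 ≤ r := add_nonneg (Complex.normSq_nonneg _) (sq_nonneg _)
  set A : Matrix (Fin 2) (Fin 2) ℂ := (1 / 2 : ℂ) • (U + Uᵀ) with hAdef
  have hA : Aᴴ * A = (r:ℂ) • 1 := by
    ext i j
    fin_cases i <;> fin_cases j <;>
      simp [hAdef, Matrix.mul_apply, Fin.sum_univ_two, Matrix.conjTranspose_apply,
        Matrix.smul_apply, Matrix.transpose_apply, Matrix.add_apply, Matrix.one_apply,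
        h11, h10, Complex.ext_iff, Complex.normSq_apply, Complex.mul_re, Complex.mul_im] <;>
      constructor <;> (try rw [hr, Complex.normSq_apply]) <;> ring
  have heig : ∀ i : Fin 2,
      (Matrix.posSemidef_conjTranspose_mul_self A).isHermitian.eigenvalues i = r :=
    fun i => eig_scalar hA _ i
  have hsum : ∑ i, singVals A i = 2 * Real.sqrt r := by
    simp [singVals, Fin.sum_univ_two, heig]
  have htr : (U * U.map (starRingEnd ℂ)).trace.re + 2 = 4 * r := by
    have h2 : (2:ℝ) = 2 * (Complex.normSq (U 0 0) + Complex.normSq (U 0 1)) := by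
      rw [hnorm]; ring
    rw [h2]
    simp [Matrix.trace, Matrix.diag, Matrix.mul_apply, Fin.sum_univ_two, Matrix.map_apply,
      h11, h10, Complex.normSq_apply, Complex.mul_re, Complex.add_re, hr]
    ring
  rw [hsum, htr]
  rw [show (4:ℝ) * r = 2^2 * r by ring, Real.sqrt_mul (by positivity) r,
    Real.sqrt_sq (by norm_num)]
end

section
/- For d odd and x ∈ [-1+2/d, 1], setting α = (d/(d-1))·√[(1/2)(1-1/d)(1-2/d+x)], β = √(1-α²), and U the block-diagonal unitary consisting of (d-1)/2 copies of the rotation [[α,β],[-β,α]] followed by a 1×1 block 1, one has (1/d)tr[UŪ] = x and (1/d)|tr U| = √[(1/2)(1-1/d)(1-2/d+x)] + 1/d. -/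
/-!
`U` is a reindexing of the real block-diagonal matrix `diag(R, …, R, 1)` with
`R = [[α, β], [-β, α]]`, where consecutive indices `2a, 2a + 1` form the `a`-th block.
Each block is orthogonal because `α² + β² = 1`, and `U` is real, so `tr[U Ū] = tr[U²]`.
Block by block, `tr U = (d - 1) α + 1` and `tr U² = (d - 1)(α² - β²) + 1`, and the choice of `α`
makes `2 (d - 1) α² = d - 2 + d x`, which turns these into the two claimed values.
-/

open Matrix

namespace Matrix

variable {l m o α : Type*} [Fintype l] [Fintype m] [Fintype o]

theorem trace_fromBlocks [AddCommMonoid α] (A : Matrix l l α) (B : Matrix l m α)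
    (C : Matrix m l α) (D : Matrix m m α) : trace (fromBlocks A B C D) = trace A + trace D := by
  simp [trace, Fintype.sum_sum_type]

theorem trace_reindex [AddCommMonoid α] (e : l ≃ m) (M : Matrix l l α) :
    trace (reindex e e M) = trace M :=
  e.symm.sum_comp fun i => M i i

theorem trace_map_ofReal (M : Matrix m m ℝ) :
    trace (M.map ((↑) : ℝ → ℂ)) = ((trace M : ℝ) : ℂ) :=
  (AddMonoidHom.map_trace Complex.ofRealHom M).symm

theorem map_ofReal_mul_map_conj (U : Matrix m m ℝ) :
    U.map ((↑) : ℝ → ℂ) * (U.map ((↑) : ℝ → ℂ)).map (starRingEnd ℂ) =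
      (U * U).map ((↑) : ℝ → ℂ) := by
  have hconj : (U.map ((↑) : ℝ → ℂ)).map (starRingEnd ℂ) = U.map ((↑) : ℝ → ℂ) := by
    ext i j; simp
  rw [hconj]
  exact (Matrix.map_mul (f := Complex.ofRealHom)).symm

variable [DecidableEq l] [DecidableEq m] [DecidableEq o]

section UnitaryGroup

variable [CommRing α] [StarRing α]

theorem fromBlocks_mem_unitaryGroup {A : Matrix l l α} {D : Matrix m m α}
    (hA : A ∈ unitaryGroup l α) (hD : D ∈ unitaryGroup m α) :
    fromBlocks A 0 0 D ∈ unitaryGroup (l ⊕ m) α := by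
  rw [mem_unitaryGroup_iff] at *
  rw [star_eq_conjTranspose, fromBlocks_conjTranspose, fromBlocks_multiply,
    ← star_eq_conjTranspose, ← star_eq_conjTranspose, hA, hD]
  simp

theorem blockDiagonal_mem_unitaryGroup {M : o → Matrix m m α}
    (hM : ∀ k, M k ∈ unitaryGroup m α) : blockDiagonal M ∈ unitaryGroup (m × o) α := by
  simp only [mem_unitaryGroup_iff, star_eq_conjTranspose] at *
  simp_rw [blockDiagonal_conjTranspose, ← blockDiagonal_mul, hM]
  exact blockDiagonal_one

theorem reindex_mem_unitaryGroup (e : l ≃ m) {U : Matrix l l α}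
    (hU : U ∈ unitaryGroup l α) : reindex e e U ∈ unitaryGroup m α := by
  rw [mem_unitaryGroup_iff] at *
  rw [star_eq_conjTranspose, conjTranspose_reindex, reindex_apply, reindex_apply,
    submatrix_mul_equiv, ← star_eq_conjTranspose, hU, submatrix_one_equiv]

end UnitaryGroup

theorem map_ofReal_mem_unitaryGroup {U : Matrix m m ℝ} (hU : U ∈ unitaryGroup m ℝ) :
    U.map ((↑) : ℝ → ℂ) ∈ unitaryGroup m ℂ := by
  rw [mem_unitaryGroup_iff] at *
  have hstar : star (U.map ((↑) : ℝ → ℂ)) = Complex.ofRealHom.mapMatrix (star U) := by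
    ext i j; simp
  rw [hstar, show U.map ((↑) : ℝ → ℂ) = Complex.ofRealHom.mapMatrix U from rfl, ← map_mul, hU,
    map_one]

end Matrix

def planeRotation (α β : ℝ) : Matrix (Fin 2) (Fin 2) ℝ := !![α, β; -β, α]

def rotationBlocks (n : ℕ) (α β : ℝ) :
    Matrix ((Fin 2 × Fin n) ⊕ Fin 1) ((Fin 2 × Fin n) ⊕ Fin 1) ℝ :=
  fromBlocks (blockDiagonal fun _ => planeRotation α β) 0 0 1

def interleave (n : ℕ) : (Fin 2 × Fin n) ⊕ Fin 1 ≃ Fin (2 * n + 1) :=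
  (((Equiv.prodComm _ _).trans finProdFinEquiv).sumCongr (Equiv.refl _)).trans
    (finSumFinEquiv.trans (finCongr (by ring)))

@[simp] theorem interleave_inl_val (n : ℕ) (b : Fin 2) (a : Fin n) :
    (interleave n (.inl (b, a)) : ℕ) = b + 2 * a := rfl

@[simp] theorem interleave_inr_val (n : ℕ) (k : Fin 1) :
    (interleave n (.inr k) : ℕ) = 2 * n := by
  simp [interleave, Fin.natAdd]
  omega

section Rotation

variable {α β : ℝ}

theorem planeRotation_mem_unitaryGroup (h : α ^ 2 + β ^ 2 = 1) :
    planeRotation α β ∈ unitaryGroup (Fin 2) ℝ := by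
  rw [mem_unitaryGroup_iff, star_eq_conjTranspose, conjTranspose_eq_transpose_of_trivial]
  ext i j
  fin_cases i <;> fin_cases j <;> simp [planeRotation, mul_apply, Fin.sum_univ_two, mul_comm] <;>
    linear_combination h

theorem trace_planeRotation : trace (planeRotation α β) = 2 * α := by
  simp [planeRotation, trace_fin_two]
  ring

theorem trace_planeRotation_mul_self :
    trace (planeRotation α β * planeRotation α β) = 2 * (α ^ 2 - β ^ 2) := by
  simp [planeRotation, trace_fin_two]
  ring

theorem rotationBlocks_mem_unitaryGroup (n : ℕ) (h : α ^ 2 + β ^ 2 = 1) :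
    rotationBlocks n α β ∈ unitaryGroup _ ℝ :=
  fromBlocks_mem_unitaryGroup
    (blockDiagonal_mem_unitaryGroup fun _ => planeRotation_mem_unitaryGroup h) (one_mem _)

theorem trace_rotationBlocks (n : ℕ) : trace (rotationBlocks n α β) = n * (2 * α) + 1 := by
  simp [rotationBlocks, trace_fromBlocks, trace_blockDiagonal, trace_planeRotation]

theorem trace_rotationBlocks_mul_self (n : ℕ) :
    trace (rotationBlocks n α β * rotationBlocks n α β) = n * (2 * (α ^ 2 - β ^ 2)) + 1 := by
  simp [rotationBlocks, fromBlocks_multiply, ← blockDiagonal_mul, trace_fromBlocks,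
    trace_blockDiagonal, trace_planeRotation_mul_self]

theorem reindex_rotationBlocks_apply (n : ℕ) (i j : Fin (2 * n + 1)) :
    reindex (interleave n) (interleave n) (rotationBlocks n α β) i j =
      if (i : ℕ) = (j : ℕ) ∧ (i : ℕ) = 2 * n + 1 - 1 then 1
      else if (i : ℕ) = (j : ℕ) then α
      else if (i : ℕ) + 1 = (j : ℕ) ∧ (i : ℕ) % 2 = 0 then β
      else if (j : ℕ) + 1 = (i : ℕ) ∧ (j : ℕ) % 2 = 0 then -β
      else 0 := by
  obtain ⟨p, rfl⟩ := (interleave n).surjective i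
  obtain ⟨q, rfl⟩ := (interleave n).surjective j
  rw [reindex_apply, submatrix_apply, Equiv.symm_apply_apply, Equiv.symm_apply_apply]
  rcases p with ⟨b, a⟩ | k <;> rcases q with ⟨b', a'⟩ | k' <;> (try fin_cases b) <;>
    (try fin_cases b') <;>
    simp [rotationBlocks, planeRotation, blockDiagonal_apply, Fin.ext_iff, Fin.fin_one_eq_zero] <;>
    split_ifs <;> first | rfl | omega

theorem reindex_rotationBlocks_map_ofReal (n : ℕ) :
    (reindex (interleave n) (interleave n) (rotationBlocks n α β)).map ((↑) : ℝ → ℂ) =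
      of fun i j : Fin (2 * n + 1) =>
        if (i : ℕ) = (j : ℕ) ∧ (i : ℕ) = 2 * n + 1 - 1 then 1
        else if (i : ℕ) = (j : ℕ) then (α : ℂ)
        else if (i : ℕ) + 1 = (j : ℕ) ∧ (i : ℕ) % 2 = 0 then (β : ℂ)
        else if (j : ℕ) + 1 = (i : ℕ) ∧ (j : ℕ) % 2 = 0 then -(β : ℂ)
        else 0 := by
  ext i j
  rw [of_apply, map_apply, reindex_rotationBlocks_apply]
  split_ifs <;> simp

end Rotation

section Parameters

variable {d x : ℝ}

theorem sq_alpha (hd : 1 < d) (hx : -1 + 2 / d ≤ x) :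
    (d / (d - 1) * √(1 / 2 * (1 - 1 / d) * (1 - 2 / d + x))) ^ 2 =
      (d - 2 + d * x) / (2 * (d - 1)) := by
  have hd0 : d ≠ 0 := by positivity
  have hd1 : d - 1 ≠ 0 := by linarith
  have hrad : 0 ≤ 1 / 2 * (1 - 1 / d) * (1 - 2 / d + x) := by
    have : 1 / d ≤ 1 := (div_le_one (by linarith)).2 hd.le
    have : 0 ≤ 1 - 2 / d + x := by linarith
    positivity
  rw [mul_pow, Real.sq_sqrt hrad]
  field_simp

theorem alpha_mem_Icc (hd : 1 < d) (hx : x ∈ Set.Icc (-1 + 2 / d) 1) :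
    d / (d - 1) * √(1 / 2 * (1 - 1 / d) * (1 - 2 / d + x)) ∈ Set.Icc 0 1 := by
  have hnonneg : 0 ≤ d / (d - 1) * √(1 / 2 * (1 - 1 / d) * (1 - 2 / d + x)) :=
    mul_nonneg (div_nonneg (by linarith) (by linarith)) (Real.sqrt_nonneg _)
  refine ⟨hnonneg, (pow_le_one_iff_of_nonneg hnonneg two_ne_zero).1 ?_⟩
  rw [sq_alpha hd hx.1, div_le_one (by linarith)]
  nlinarith [hx.2]

end Parameters

/-- the explicit block-diagonal maximizer: for odd `d ≥ 3` and
`x ∈ [-1+2/d, 1]`, with `α = (d/(d-1))·√[(1/2)(1-1/d)(1-2/d+x)]`, `β = √(1-α²)`, the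
block-diagonal unitary consisting of `(d-1)/2` rotation blocks `[[α,β],[-β,α]]` and a final
`1 × 1` block `1` satisfies `α ∈ [0,1]`, is unitary, has `(1/d) tr[U Ū] = x` and
`(1/d)|tr U| = √[(1/2)(1-1/d)(1-2/d+x)] + 1/d`. -/
theorem stmt_13 (d : ℕ) (hd : Odd d) (hd3 : 3 ≤ d) (x : ℝ)
    (hx : x ∈ Set.Icc (-1 + 2 / (d : ℝ)) 1)
    (α β : ℝ)
    (hα : α = ((d : ℝ) / (d - 1)) *
      Real.sqrt ((1 / 2) * (1 - 1 / (d : ℝ)) * (1 - 2 / (d : ℝ) + x)))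
    (hβ : β = Real.sqrt (1 - α ^ 2))
    (U : Matrix (Fin d) (Fin d) ℂ)
    (hUdef : U = Matrix.of fun i j : Fin d =>
      if (i : ℕ) = (j : ℕ) ∧ (i : ℕ) = d - 1 then 1
      else if (i : ℕ) = (j : ℕ) then (α : ℂ)
      else if (i : ℕ) + 1 = (j : ℕ) ∧ (i : ℕ) % 2 = 0 then (β : ℂ)
      else if (j : ℕ) + 1 = (i : ℕ) ∧ (j : ℕ) % 2 = 0 then -(β : ℂ)
      else 0) :
    α ∈ Set.Icc (0 : ℝ) 1 ∧
    U ∈ Matrix.unitaryGroup (Fin d) ℂ ∧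
    (U * U.map (starRingEnd ℂ)).trace = (d : ℂ) * (x : ℂ) ∧
    ‖U.trace‖ / d =
      Real.sqrt ((1 / 2) * (1 - 1 / (d : ℝ)) * (1 - 2 / (d : ℝ) + x)) + 1 / d := by
  obtain ⟨n, rfl⟩ := hd
  have hn : (n : ℝ) ≠ 0 := by exact_mod_cast (by omega : n ≠ 0)
  have hd1 : (1 : ℝ) < (2 * n + 1 : ℕ) := by exact_mod_cast (by omega : 1 < 2 * n + 1)
  have hαsq := hα ▸ sq_alpha hd1 hx.1
  have hα01 : α ∈ Set.Icc 0 1 := hα ▸ alpha_mem_Icc hd1 hx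
  have hβsq : β ^ 2 = 1 - α ^ 2 := hβ ▸ Real.sq_sqrt (by nlinarith [hα01.2, hα01.1])
  have hU := hUdef.trans (reindex_rotationBlocks_map_ofReal n).symm
  refine ⟨hα01, ?_, ?_, ?_⟩
  · rw [hU]
    exact map_ofReal_mem_unitaryGroup
      (reindex_mem_unitaryGroup _ (rotationBlocks_mem_unitaryGroup n (by linarith)))
  · have htr : (n : ℝ) * (2 * (α ^ 2 - β ^ 2)) + 1 = (2 * n + 1 : ℕ) * x := by
      rw [hβsq, hαsq]
      push_cast
      field_simp
      ring
    rw [hU, map_ofReal_mul_map_conj, trace_map_ofReal, reindex_apply, submatrix_mul_equiv,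
      ← reindex_apply, trace_reindex, trace_rotationBlocks_mul_self, htr,
      Complex.ofReal_mul, Complex.ofReal_natCast]
  · rw [hU, trace_map_ofReal, trace_reindex, trace_rotationBlocks, Complex.norm_real,
      Real.norm_of_nonneg (by nlinarith [hα01.1, n.cast_nonneg (α := ℝ)]), hα]
    push_cast
    field_simp
    ring
end

section
/- Let T(ρ) = (tr[ρ]·I - ρ^T)/(d-1) be the Werner–Holevo channel on M_d(ℂ) with d ≥ 3 odd. Then T is a unital quantum channel (completely positive, trace-preserving, T(I)=I) that is not a convex combination of unitary conjugations. -/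
open Matrix
open scoped ComplexOrder

/-- The action of `id_n ⊗ T` on block matrices. -/
def blockApply (n d : ℕ) (T : Matrix (Fin d) (Fin d) ℂ → Matrix (Fin d) (Fin d) ℂ)
    (M : Matrix (Fin n × Fin d) (Fin n × Fin d) ℂ) :
    Matrix (Fin n × Fin d) (Fin n × Fin d) ℂ :=
  Matrix.of fun p q => T (Matrix.of fun k l => M (p.1, k) (q.1, l)) p.2 q.2

/-- Complete positivity. -/
def IsCP (d : ℕ) (T : Matrix (Fin d) (Fin d) ℂ → Matrix (Fin d) (Fin d) ℂ) : Prop :=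
  ∀ (n : ℕ) (M : Matrix (Fin n × Fin d) (Fin n × Fin d) ℂ),
    M.PosSemidef → (blockApply n d T M).PosSemidef

/-!
Complete positivity: `T` has the Kraus operators `(E_ij - E_ji) / √(2(d-1))`, because
`∑ᵢⱼ (E_ij - E_ji) ρ (E_ij - E_ji)ᴴ = 2 (tr ρ · I - ρᵀ)`.

Not mixed unitary: the linear functional `Φ ↦ ∑_ab Φ(E_ab)_ba = tr[C_Φ F]` (Choi matrix paired with
the swap `F`) takes the value `-d` on `T`, and the value `tr(U Ū)` on `ρ ↦ U ρ Uᴴ`. For unitary `U`,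
`‖U + Uᵀ‖²_F = 2 (d + Re tr(U Ū)) ≥ 0`, with equality only if `Uᵀ = -U`, which is impossible in
odd dimension since then `det U = (-1)^d det U = -det U` would vanish. So a convex combination of
unitary conjugations has `Re tr[C_Φ F] > -d`.
-/

open scoped Kronecker

lemma blockApply_conj {n d : ℕ} (K : Matrix (Fin d) (Fin d) ℂ)
    (M : Matrix (Fin n × Fin d) (Fin n × Fin d) ℂ) :
    blockApply n d (fun ρ => K * ρ * Kᴴ) M = (1 ⊗ₖ K) * M * (1 ⊗ₖ K)ᴴ := by
  ext ⟨p₁, p₂⟩ ⟨q₁, q₂⟩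
  simp [blockApply, mul_apply, one_apply, Fintype.sum_prod_type, apply_ite (starRingEnd ℂ),
    ite_mul, mul_ite, Finset.sum_ite_irrel, Finset.sum_ite_eq]

lemma isCP_sum_conj {ι : Type*} [Fintype ι] {d : ℕ} (K : ι → Matrix (Fin d) (Fin d) ℂ) :
    IsCP d (fun ρ => ∑ i, K i * ρ * (K i)ᴴ) := by
  intro n M hM
  have : blockApply n d (fun ρ => ∑ i, K i * ρ * (K i)ᴴ) M
      = ∑ i, blockApply n d (fun ρ => K i * ρ * (K i)ᴴ) M := by
    ext p q; simp [blockApply, Matrix.sum_apply]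
  rw [this]
  exact posSemidef_sum _ fun i _ => by
    rw [blockApply_conj]; exact hM.mul_mul_conjTranspose_same _

lemma IsCP.const_smul {d : ℕ} {T : Matrix (Fin d) (Fin d) ℂ → Matrix (Fin d) (Fin d) ℂ}
    (hT : IsCP d T) {c : ℂ} (hc : 0 ≤ c) : IsCP d (fun ρ => c • T ρ) :=
  fun n M hM => (hT n M hM).smul hc

noncomputable def wernerHolevo (d : ℕ) (ρ : Matrix (Fin d) (Fin d) ℂ) : Matrix (Fin d) (Fin d) ℂ :=
  ((d : ℂ) - 1)⁻¹ • (ρ.trace • 1 - ρᵀ)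

lemma sum_single_mul_mul_single_swap {d : ℕ} (ρ : Matrix (Fin d) (Fin d) ℂ) :
    ∑ i, ∑ j, single i j (1 : ℂ) * ρ * single j i 1 = ρ.trace • 1 := by
  ext a b
  simp [Matrix.sum_apply, single_apply, one_apply, trace, ite_and, Finset.sum_ite_irrel]

lemma sum_single_mul_mul_single {d : ℕ} (ρ : Matrix (Fin d) (Fin d) ℂ) :
    ∑ i, ∑ j, single i j (1 : ℂ) * ρ * single i j 1 = ρᵀ := by
  ext a b
  simp [Matrix.sum_apply, single_apply, ite_and, Finset.sum_ite_irrel]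

lemma sum_antisymm_conj {d : ℕ} (ρ : Matrix (Fin d) (Fin d) ℂ) :
    ∑ i, ∑ j, (single i j 1 - single j i 1) * ρ * (single i j (1 : ℂ) - single j i 1)ᴴ
      = (2 : ℂ) • (ρ.trace • 1 - ρᵀ) := by
  have htr := sum_single_mul_mul_single_swap ρ
  have htr' := htr
  rw [Finset.sum_comm] at htr'
  have hT := sum_single_mul_mul_single ρ
  have hT' := hT
  rw [Finset.sum_comm] at hT'
  simp only [conjTranspose_sub, conjTranspose_single, star_one, sub_mul, mul_sub,
    Finset.sum_sub_distrib, htr, htr', hT, hT']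
  rw [two_smul]
  abel

lemma isCP_wernerHolevo {d : ℕ} (hd : 1 ≤ d) : IsCP d (wernerHolevo d) := by
  have hc : (0 : ℂ) ≤ (2 * ((d : ℂ) - 1))⁻¹ :=
    inv_nonneg.mpr (mul_nonneg zero_le_two (sub_nonneg.mpr (by exact_mod_cast hd)))
  convert (isCP_sum_conj fun p : Fin d × Fin d =>
    single p.1 p.2 (1 : ℂ) - single p.2 p.1 1).const_smul hc using 1
  funext ρ
  rw [Fintype.sum_prod_type, sum_antisymm_conj, smul_smul, wernerHolevo, mul_inv, mul_right_comm, inv_mul_cancel₀ two_ne_zero, one_mul]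

lemma trace_wernerHolevo {d : ℕ} (hd : d ≠ 1) (ρ : Matrix (Fin d) (Fin d) ℂ) :
    (wernerHolevo d ρ).trace = ρ.trace := by
  have hd' : (d : ℂ) - 1 ≠ 0 := sub_ne_zero.mpr (by exact_mod_cast hd)
  simp only [wernerHolevo, trace_smul, trace_sub, trace_one, trace_transpose, Fintype.card_fin,
    smul_eq_mul]
  field_simp

lemma wernerHolevo_one {d : ℕ} (hd : d ≠ 1) : wernerHolevo d 1 = 1 := by
  have hd' : (d : ℂ) - 1 ≠ 0 := sub_ne_zero.mpr (by exact_mod_cast hd)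
  have h : (d : ℂ) • (1 : Matrix (Fin d) (Fin d) ℂ) - 1 = ((d : ℂ) - 1) • 1 := by
    rw [sub_smul, one_smul]
  rw [wernerHolevo, trace_one, transpose_one, Fintype.card_fin, h, smul_smul,
    inv_mul_cancel₀ hd', one_smul]

def swapPairing (d : ℕ) (Φ : Matrix (Fin d) (Fin d) ℂ → Matrix (Fin d) (Fin d) ℂ) : ℂ :=
  ∑ a, ∑ b, Φ (single a b 1) b a

lemma swapPairing_sum_smul {ι : Type*} [Fintype ι] {d : ℕ} (c : ι → ℂ)
    (Φ : ι → Matrix (Fin d) (Fin d) ℂ → Matrix (Fin d) (Fin d) ℂ) :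
    swapPairing d (fun ρ => ∑ i, c i • Φ i ρ) = ∑ i, c i * swapPairing d (Φ i) := by
  simp only [swapPairing, Matrix.sum_apply, Matrix.smul_apply, smul_eq_mul, Finset.mul_sum]
  symm
  rw [Finset.sum_comm]
  exact Finset.sum_congr rfl fun a _ => Finset.sum_comm

lemma swapPairing_conj {d : ℕ} (U : Matrix (Fin d) (Fin d) ℂ) :
    swapPairing d (fun ρ => U * ρ * Uᴴ) = ∑ a, ∑ b, U b a * star (U a b) := by
  simp [swapPairing, mul_apply, single_apply, ite_and]

lemma swapPairing_wernerHolevo {d : ℕ} (hd : d ≠ 1) : swapPairing d (wernerHolevo d) = -d := by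
  have hd' : (d : ℂ) - 1 ≠ 0 := sub_ne_zero.mpr (by exact_mod_cast hd)
  have h : ∀ a b : Fin d, wernerHolevo d (single a b 1) b a
      = ((d : ℂ) - 1)⁻¹ * ((if a = b then 1 else 0) - 1) := by
    intro a b
    by_cases hab : a = b
    · subst hab; simp [wernerHolevo]
    · simp [wernerHolevo, hab]
  simp only [swapPairing, h, ← Finset.mul_sum, Finset.sum_sub_distrib, Finset.sum_ite_eq,
    Finset.mem_univ, if_true, Finset.sum_const, Finset.card_univ, Fintype.card_fin, nsmul_eq_mul,
    mul_one]
  rw [inv_mul_eq_iff_eq_mul₀ hd']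
  ring

lemma sum_normSq_add_transpose_of_mul_conjTranspose_eq_one {d : ℕ}
    {U : Matrix (Fin d) (Fin d) ℂ} (hU : U * Uᴴ = 1) :
    ∑ a, ∑ b, Complex.normSq (U a b + U b a)
      = 2 * ((∑ a, ∑ b, U b a * star (U a b)).re + d) := by
  have hrow : ∀ a, ∑ b, Complex.normSq (U a b) = 1 := fun a => by
    have h := congrFun (congrFun hU a) a
    simp only [mul_apply, conjTranspose_apply, RCLike.star_def, Complex.mul_conj, one_apply_eq]
      at h
    exact_mod_cast h
  have hexpand : ∀ a b, Complex.normSq (U a b + U b a)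
      = Complex.normSq (U a b) + Complex.normSq (U b a) + 2 * (U b a * star (U a b)).re := by
    intro a b
    rw [Complex.normSq_add]
    congr 2
    rw [← Complex.conj_re, map_mul, Complex.conj_conj, mul_comm]
    rfl
  simp only [hexpand, Finset.sum_add_distrib, hrow, Complex.re_sum, ← Finset.mul_sum]
  rw [Finset.sum_comm (f := fun a b => Complex.normSq (U b a))]
  simp only [hrow, Finset.sum_const, Finset.card_univ, Fintype.card_fin, nsmul_eq_mul, mul_one]
  ring

lemma det_eq_zero_of_transpose_eq_neg {n R : Type*} [Fintype n] [DecidableEq n] [CommRing R]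
    [IsAddTorsionFree R] {A : Matrix n n R} (hn : Odd (Fintype.card n)) (hA : Aᵀ = -A) :
    A.det = 0 := by
  have h := congrArg det hA
  rw [det_transpose, det_neg, hn.neg_one_pow, neg_one_mul] at h
  exact self_eq_neg.mp h

lemma neg_card_lt_re_swapPairing_conj {d : ℕ} (hd : Odd d) {U : Matrix (Fin d) (Fin d) ℂ}
    (hU : U ∈ unitaryGroup (Fin d) ℂ) :
    -(d : ℝ) < (swapPairing d fun ρ => U * ρ * Uᴴ).re := by
  rw [swapPairing_conj]
  have hUU : U * Uᴴ = 1 := mem_unitaryGroup_iff.mp hU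
  have hsum := sum_normSq_add_transpose_of_mul_conjTranspose_eq_one hUU
  have hnonneg : 0 ≤ ∑ a, ∑ b, Complex.normSq (U a b + U b a) :=
    Finset.sum_nonneg fun _ _ => Finset.sum_nonneg fun _ _ => Complex.normSq_nonneg _
  refine lt_of_le_of_ne (by linarith) fun heq => ?_
  have hsym : ∀ a b, U a b + U b a = 0 := by
    rw [← heq, neg_add_cancel, mul_zero, Finset.sum_eq_zero_iff_of_nonneg fun _ _ =>
      Finset.sum_nonneg fun _ _ => Complex.normSq_nonneg _] at hsum
    intro a b
    rw [← Complex.normSq_eq_zero]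
    exact (Finset.sum_eq_zero_iff_of_nonneg (fun _ _ => Complex.normSq_nonneg _)).mp
      (hsum a (Finset.mem_univ a)) b (Finset.mem_univ b)
  have hskew : Uᵀ = -U := by
    ext a b
    simpa [eq_neg_iff_add_eq_zero] using hsym b a
  exact (isUnit_det_of_right_inverse hUU).ne_zero
    (det_eq_zero_of_transpose_eq_neg (by rwa [Fintype.card_fin]) hskew)

lemma lt_sum_mul_of_lt {ι : Type*} [Fintype ι] {p f : ι → ℝ} {x : ℝ} (hp : ∀ i, 0 ≤ p i)
    (hp₁ : ∑ i, p i = 1) (hf : ∀ i, x < f i) : x < ∑ i, p i * f i := by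
  obtain ⟨i, -, hi⟩ := Finset.exists_ne_zero_of_sum_ne_zero (hp₁ ▸ one_ne_zero)
  have : 0 < ∑ i, p i * (f i - x) :=
    Finset.sum_pos' (fun j _ => mul_nonneg (hp j) (sub_pos.mpr (hf j)).le)
      ⟨i, Finset.mem_univ i, mul_pos ((hp i).lt_of_ne' hi) (sub_pos.mpr (hf i))⟩
  simpa only [mul_sub, Finset.sum_sub_distrib, ← Finset.sum_mul, hp₁, one_mul, sub_pos] using this

/-- The Werner–Holevo channel `T(ρ) = (tr[ρ]·I - ρᵀ)/(d-1)` for odd `d ≥ 3` is a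
unital quantum channel that is not a convex combination of unitary conjugations. -/
theorem stmt_16 (d : ℕ) (hd : Odd d) (hd3 : 3 ≤ d)
    (T : Matrix (Fin d) (Fin d) ℂ → Matrix (Fin d) (Fin d) ℂ)
    (hT : T = fun ρ => ((d : ℂ) - 1)⁻¹ •
      (ρ.trace • (1 : Matrix (Fin d) (Fin d) ℂ) - ρᵀ)) :
    IsCP d T ∧
    (∀ A : Matrix (Fin d) (Fin d) ℂ, (T A).trace = A.trace) ∧
    T 1 = 1 ∧
    ¬ ∃ (n : ℕ) (p : Fin n → ℝ) (U : Fin n → Matrix (Fin d) (Fin d) ℂ),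
        (∀ i, 0 ≤ p i) ∧ ∑ i, p i = 1 ∧ (∀ i, U i ∈ Matrix.unitaryGroup (Fin d) ℂ) ∧
        ∀ ρ : Matrix (Fin d) (Fin d) ℂ, T ρ = ∑ i, (p i : ℂ) • (U i * ρ * (U i)ᴴ) := by
  obtain rfl : T = wernerHolevo d := hT
  have hd1 : d ≠ 1 := by omega
  refine ⟨isCP_wernerHolevo (by omega), trace_wernerHolevo hd1, wernerHolevo_one hd1, ?_⟩
  rintro ⟨n, p, U, hp, hp₁, hU, hmix⟩
  have hpair : (swapPairing d (wernerHolevo d)).re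
      = ∑ i, p i * (swapPairing d fun ρ => U i * ρ * (U i)ᴴ).re := by
    rw [funext hmix, swapPairing_sum_smul, Complex.re_sum]
    simp only [Complex.re_ofReal_mul]
  rw [swapPairing_wernerHolevo hd1, Complex.neg_re, Complex.natCast_re] at hpair
  exact (lt_sum_mul_of_lt hp hp₁ fun i => neg_card_lt_re_swapPairing_conj hd (hU i)).ne hpair
end

section
/- Let d ≥ 3 be odd and suppose A is a 2d×2d complex matrix of quaternion type (i.e., consisting of 2×2 blocks of the form [[a, b],[-b̄, ā]]) that is Hermitian, has purely imaginary quaternion entries (so Ā^{T₂} = -A when viewed blockwise), and satisfies A² + 2A - (d²-1)I = 0. Then U = (1/d)(I + A) is Hermitian unitary and satisfies (1/(2d))tr[U·Ū^{T₂}] = -1 + 2/d². -/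
open Matrix

/-- Partial transpose on the second tensor factor. -/
def ptrans2 (d₁ d₂ : ℕ) (M : Matrix (Fin d₁ × Fin d₂) (Fin d₁ × Fin d₂) ℂ) :
    Matrix (Fin d₁ × Fin d₂) (Fin d₁ × Fin d₂) ℂ :=
  Matrix.of fun p q => M (p.1, q.2) (q.1, p.2)

/-!
The relation `A² = (d² - 1) - 2A` gives `(1 + A)² = d²`, so `U` is an involution, and
`(1 + A)(1 - A) = (2 - d²) + 2A`. Since `Ā^{T₂} = -A`, the matrix `Ū^{T₂}` is `(1 - A)/d`; on the
diagonal this condition reads `conj (A p p) = -A p p`, which together with Hermiticity makes `A`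
traceless. Hence `tr (U Ū^{T₂}) = 2d (2 - d²)/d²`.
-/

section QuadraticRelation

variable {𝕜 R : Type*} [Field 𝕜] [Ring R] [Algebra 𝕜 R] {c : 𝕜} {A : R}

lemma inv_smul_one_add_mul_self (hA : A * A = (c ^ 2 - 1) • (1 : R) - (2 : 𝕜) • A)
    (hc : c ≠ 0) : (c⁻¹ • (1 + A)) * (c⁻¹ • (1 + A)) = 1 := by
  calc (c⁻¹ • (1 + A)) * (c⁻¹ • (1 + A)) = (c⁻¹ * c⁻¹) • (1 + 2 • A + A * A) := by
        rw [smul_mul_smul]; congr 1; noncomm_ring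
    _ = (c⁻¹ * c⁻¹ * c ^ 2) • (1 : R) := by rw [hA]; module
    _ = 1 := by rw [show c⁻¹ * c⁻¹ * c ^ 2 = 1 by field_simp, one_smul]

lemma inv_smul_one_add_mul_inv_smul_one_sub
    (hA : A * A = (c ^ 2 - 1) • (1 : R) - (2 : 𝕜) • A) :
    (c⁻¹ • (1 + A)) * (c⁻¹ • (1 - A)) = (c⁻¹ * c⁻¹) • ((2 - c ^ 2) • (1 : R) + (2 : 𝕜) • A) := by
  rw [smul_mul_smul]
  congr 1
  calc (1 + A) * (1 - A) = 1 - A * A := by noncomm_ring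
    _ = _ := by rw [hA]; module

end QuadraticRelation

section PartialTranspose

variable {d₁ d₂ : ℕ}

lemma ptrans2_map_conj_smul_one_add (c : ℂ) (A : Matrix (Fin d₁ × Fin d₂) (Fin d₁ × Fin d₂) ℂ) :
    ptrans2 d₁ d₂ ((c • (1 + A)).map (starRingEnd ℂ)) =
      starRingEnd ℂ c • (1 + ptrans2 d₁ d₂ (A.map (starRingEnd ℂ))) := by
  ext p q
  simp only [ptrans2, of_apply, map_apply, Matrix.smul_apply, Matrix.add_apply, one_apply,
    smul_eq_mul, map_mul, map_add, apply_ite (starRingEnd ℂ), map_one, map_zero, Prod.ext_iff]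
  simp only [eq_comm (a := p.2)]

lemma trace_eq_zero_of_ptrans2_map_conj_eq_neg {A : Matrix (Fin d₁ × Fin d₂) (Fin d₁ × Fin d₂) ℂ}
    (hA : A.IsHermitian) (h : ptrans2 d₁ d₂ (A.map (starRingEnd ℂ)) = -A) : A.trace = 0 := by
  refine Finset.sum_eq_zero fun p _ => ?_
  have hp := congrFun (congrFun h p) p
  have hconj : starRingEnd ℂ (A p p) = A p p := hA.apply p p
  simp only [ptrans2, of_apply, map_apply, Matrix.neg_apply, hconj] at hp
  show A p p = 0
  linear_combination hp / 2

end PartialTranspose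

theorem stmt_18_general (d : ℕ) (hd : Odd d)
    (A : Matrix (Fin d × Fin 2) (Fin d × Fin 2) ℂ)
    (hherm : Aᴴ = A)
    (him : ptrans2 d 2 (A.map (starRingEnd ℂ)) = -A)
    (heq : A * A + (2 : ℂ) • A - ((d : ℂ) ^ 2 - 1) • (1 : Matrix (Fin d × Fin 2) (Fin d × Fin 2) ℂ) = 0)
    (U : Matrix (Fin d × Fin 2) (Fin d × Fin 2) ℂ)
    (hUdef : U = ((d : ℂ))⁻¹ • (1 + A)) :
    Uᴴ = U ∧ U ∈ Matrix.unitaryGroup (Fin d × Fin 2) ℂ ∧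
    (1 / (2 * (d : ℂ))) * (U * ptrans2 d 2 (U.map (starRingEnd ℂ))).trace
      = -1 + 2 / (d : ℂ) ^ 2 := by
  have hd0 : (d : ℂ) ≠ 0 := Nat.cast_ne_zero.mpr hd.pos.ne'
  have hA2 := eq_sub_of_add_eq (sub_eq_zero.mp heq)
  have hUherm : Uᴴ = U := by
    rw [hUdef, conjTranspose_smul, conjTranspose_add, conjTranspose_one, hherm, star_inv₀,
      Complex.star_def, Complex.conj_natCast]
  have hUbar : ptrans2 d 2 (U.map (starRingEnd ℂ)) = (d : ℂ)⁻¹ • (1 - A) := by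
    rw [hUdef, ptrans2_map_conj_smul_one_add, him, map_inv₀, Complex.conj_natCast, sub_eq_add_neg]
  refine ⟨hUherm, ?_, ?_⟩
  · rw [mem_unitaryGroup_iff, star_eq_conjTranspose, hUherm, hUdef,
      inv_smul_one_add_mul_self hA2 hd0]
  · rw [hUbar, hUdef, inv_smul_one_add_mul_inv_smul_one_sub hA2, trace_smul, trace_add,
      trace_smul, trace_smul, trace_eq_zero_of_ptrans2_map_conj_eq_neg hherm him, trace_one,
      Fintype.card_prod, Fintype.card_fin, Fintype.card_fin]
    simp only [smul_eq_mul, Nat.cast_mul, Nat.cast_ofNat]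
    field_simp
    ring

/-- If `A` on `ℂ^d ⊗ ℂ²` (odd `d ≥ 3`) is of quaternion type, Hermitian, has
purely imaginary quaternion entries (`Ā^{T₂} = -A`), and satisfies `A² + 2A - (d²-1)I = 0`,
then `U = (1/d)(I + A)` is a Hermitian unitary with `(1/(2d)) tr[U Ū^{T₂}] = -1 + 2/d²`. -/
theorem stmt_18 (d : ℕ) (hd : Odd d) (hd3 : 3 ≤ d)
    (A : Matrix (Fin d × Fin 2) (Fin d × Fin 2) ℂ)
    (hquat : ∀ p q : Fin d,
      A (p, 1) (q, 1) = starRingEnd ℂ (A (p, 0) (q, 0)) ∧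
      A (p, 1) (q, 0) = -starRingEnd ℂ (A (p, 0) (q, 1)))
    (hherm : Aᴴ = A)
    (him : ptrans2 d 2 (A.map (starRingEnd ℂ)) = -A)
    (heq : A * A + (2 : ℂ) • A - ((d : ℂ) ^ 2 - 1) • (1 : Matrix (Fin d × Fin 2) (Fin d × Fin 2) ℂ) = 0)
    (U : Matrix (Fin d × Fin 2) (Fin d × Fin 2) ℂ)
    (hUdef : U = ((d : ℂ))⁻¹ • (1 + A)) :
    Uᴴ = U ∧ U ∈ Matrix.unitaryGroup (Fin d × Fin 2) ℂ ∧
    (1 / (2 * (d : ℂ))) * (U * ptrans2 d 2 (U.map (starRingEnd ℂ))).trace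
      = -1 + 2 / (d : ℂ) ^ 2 :=
  stmt_18_general d hd A hherm him heq U hUdef
end
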